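/- Let k be a field of characteristic zero and let P be a reduced, crystallographic, irreducible root pairing with root index set ι, roots P.root i lying in a k-vector space M (in Mathlib terms, P : RootPairing ι k M N with P.IsCrystallographic, P.IsReduced and irreducible). Let F be a field and f : M → Fˣ an additive-to-multiplicative character (an AddChar from (M, +) to Fˣ). Suppose f takes the value 1 on some root and a value different from 1 on some root. Then there exist indices i, j with P.root i ≠ P.root j such that f(P.root i) = f(P.root j) and f(P.root i) ≠ 1. -/

import Mathlib

/-!
The roots on which `f` is `1` and those on which it is not cannot be mutually orthogonal, by
irreducibility, so some root `αᵢ` with `f αᵢ = 1` pairs nontrivially with some root `αⱼ` with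
`f αⱼ ≠ 1`. Then `sᵢ αⱼ = αⱼ - n αᵢ` with `n ∈ ℤ` is a root different from `αⱼ` on which `f`
takes the same value as on `αⱼ`.
-/

/-- A root pairing is irreducible if its set of roots cannot be partitioned into two
nonempty mutually orthogonal subsets (orthogonality of roots being expressed by the
vanishing of the corresponding pairings). -/
def RootPairing.IsIrred {ι R M N : Type*} [CommRing R] [AddCommGroup M] [Module R M]
    [AddCommGroup N] [Module R N] (P : RootPairing ι R M N) : Prop :=
  ¬ ∃ S : Set ι, S.Nonempty ∧ Sᶜ.Nonempty ∧
      ∀ i ∈ S, ∀ j ∈ Sᶜ, P.pairing i j = 0 ∧ P.pairing j i = 0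

namespace RootPairing

variable {ι R M N : Type*} [CommRing R] [AddCommGroup M] [Module R M]
    [AddCommGroup N] [Module R N] (P : RootPairing ι R M N)

lemma addChar_root_reflectionPerm_of_eq_one [P.IsCrystallographic] {G : Type*}
    [DivisionMonoid G] (f : AddChar M G) {i : ι} (hi : f (P.root i) = 1) (j : ι) :
    f (P.root (P.reflectionPerm i j)) = f (P.root j) := by
  rw [root_reflectionPerm, reflection_apply_root' ℤ, sub_eq_add_neg, AddChar.map_add_eq_mul,
    ← neg_smul, AddChar.map_zsmul_eq_zpow, hi, one_zpow, mul_one]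

variable {P} in
lemma IsIrred.exists_pairing_ne_zero [NeZero (2 : R)] [IsDomain R] (hP : P.IsIrred)
    {S : Set ι} (hS : S.Nonempty) (hSc : Sᶜ.Nonempty) :
    ∃ i ∈ S, ∃ j ∉ S, P.pairing i j ≠ 0 := by
  by_contra! h
  exact hP ⟨S, hS, hSc, fun i hi j hj ↦ ⟨h i hi j hj, P.pairing_eq_zero_iff'.mp (h i hi j hj)⟩⟩

end RootPairing

theorem exists_distinct_roots_eq_values_ne_one
    {ι k M N : Type*} [Field k] [CharZero k]
    [AddCommGroup M] [Module k M] [AddCommGroup N] [Module k N]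
    (P : RootPairing ι k M N)
    (hcr : P.IsCrystallographic) (hirr : P.IsIrred)
    {F : Type*} [Field F] (f : AddChar M Fˣ)
    (h1 : ∃ i, f (P.root i) = 1) (h2 : ∃ j, f (P.root j) ≠ 1) :
    ∃ i j, P.root i ≠ P.root j ∧ f (P.root i) = f (P.root j) ∧ f (P.root i) ≠ 1 := by
  obtain ⟨i, hi, j, hj, hij⟩ :=
    hirr.exists_pairing_ne_zero (S := {i | f (P.root i) = 1}) h1 h2
  have hfix : P.reflectionPerm i j ≠ j := mt P.isFixedPt_reflectionPerm_iff.mp hij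
  have hf := P.addChar_root_reflectionPerm_of_eq_one f hi j
  exact ⟨P.reflectionPerm i j, j, P.root.injective.ne hfix, hf, hf ▸ hj⟩
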